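/- arXiv:1302.0657 — 2 statements merged into one kernel-verified Lean document; each statement's English description precedes it below -/
import Mathlib

section
/- There is a universal constant C such that for every x ∈ B_1(0) with x ≠ 0, ∫_{B_1(0)} (1 − |y|²) / (|x − y| · |x ȳ − 1|) dy ≤ C/|x|. (In particular the bound |x ȳ − 1| ≥ |x|(1 − |y|) holds for all y ∈ B_1(0).) -/
/-!
Since `1 - |y|² ≤ 2 (1 - |y|)` and `|x ȳ - 1| ≥ 1 - |x||y| ≥ |x| (1 - |y|)`, the integrand is at
most `(2 / |x|) · |x - y|⁻¹`. After the translation `z = x - y`, the unit disk lands inside the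
disk of radius 2, on which `|z|⁻¹` is integrable because the plane has dimension `2 > 1`.
-/

open MeasureTheory Metric ComplexConjugate

theorem preimage_sub_left_ball {E : Type*} [SeminormedAddCommGroup E] (x : E) (r : ℝ) :
    (fun y => x - y) ⁻¹' ball x r = ball 0 r := by
  ext y; simp [dist_eq_norm]

section
variable {E : Type*} [NormedAddCommGroup E] [NormedSpace ℝ E] [FiniteDimensional ℝ E]
  [MeasurableSpace E] [BorelSpace E] {μ : Measure E} [μ.IsAddHaarMeasure]

theorem locallyIntegrable_norm_inv (hd : 1 < Module.finrank ℝ E) :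
    LocallyIntegrable (fun z : E => ‖z‖⁻¹) μ :=
  locallyIntegrable_of_norm_le_rpow (C := 1) (α := 1) (by omega) (by exact_mod_cast hd)
    (.of_forall fun z => by simp [Real.rpow_neg_one]) (by fun_prop)

theorem integrableOn_ball_norm_inv (hd : 1 < Module.finrank ℝ E) (x : E) (r : ℝ) :
    IntegrableOn (fun z : E => ‖z‖⁻¹) (ball x r) μ :=
  ((locallyIntegrable_norm_inv hd).integrableOn_isCompact (isCompact_closedBall x r)).mono_set
    ball_subset_closedBall

theorem integrableOn_ball_comp_sub_left {g : E → ℝ} {x : E} {r : ℝ}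
    (hg : IntegrableOn g (ball x r) μ) : IntegrableOn (fun y => g (x - y)) (ball 0 r) μ := by
  rw [← preimage_sub_left_ball]
  exact ((μ.measurePreserving_sub_left x).integrableOn_comp_preimage
    (Homeomorph.subLeft x).measurableEmbedding).2 hg

theorem setIntegral_ball_comp_sub_left (g : E → ℝ) (x : E) (r : ℝ) :
    ∫ y in ball 0 r, g (x - y) ∂μ = ∫ z in ball x r, g z ∂μ := by
  rw [← preimage_sub_left_ball]
  exact (μ.measurePreserving_sub_left x).setIntegral_preimage_emb
    (Homeomorph.subLeft x).measurableEmbedding g _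

theorem integrableOn_ball_norm_sub_inv (hd : 1 < Module.finrank ℝ E) (x : E) (r : ℝ) :
    IntegrableOn (fun y => ‖x - y‖⁻¹) (ball 0 r) μ :=
  integrableOn_ball_comp_sub_left (integrableOn_ball_norm_inv hd x r)

theorem setIntegral_ball_norm_sub_inv_le (hd : 1 < Module.finrank ℝ E) {x : E} {r s : ℝ}
    (hx : ‖x‖ ≤ s) :
    ∫ y in ball 0 r, ‖x - y‖⁻¹ ∂μ ≤ ∫ z in ball 0 (r + s), ‖z‖⁻¹ ∂μ := by
  rw [setIntegral_ball_comp_sub_left (fun z => ‖z‖⁻¹)]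
  exact setIntegral_mono_set (integrableOn_ball_norm_inv hd 0 (r + s))
    (.of_forall fun z => by positivity) (ball_subset_ball' (by simpa using hx)).eventuallyLE
end

theorem norm_mul_one_sub_norm_le_norm_mul_conj_sub_one {x : ℂ} (hx : ‖x‖ ≤ 1) (y : ℂ) :
    ‖x‖ * (1 - ‖y‖) ≤ ‖x * conj y - 1‖ := by
  have h := norm_sub_norm_le 1 (x * conj y)
  rw [norm_one, norm_mul, Complex.norm_conj, norm_sub_rev] at h
  nlinarith [norm_nonneg y]

theorem one_sub_norm_sq_div_le {x y : ℂ} (hx₀ : x ≠ 0) (hx : ‖x‖ ≤ 1) (hy : ‖y‖ < 1) :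
    (1 - ‖y‖ ^ 2) / (‖x - y‖ * ‖x * conj y - 1‖) ≤ 2 / ‖x‖ * ‖x - y‖⁻¹ := by
  have hx_pos : 0 < ‖x‖ := norm_pos_iff.2 hx₀
  have hlower := norm_mul_one_sub_norm_le_norm_mul_conj_sub_one hx y
  have hden : 0 < ‖x * conj y - 1‖ := lt_of_lt_of_le (by nlinarith) hlower
  calc (1 - ‖y‖ ^ 2) / (‖x - y‖ * ‖x * conj y - 1‖)
      = (1 - ‖y‖ ^ 2) / ‖x * conj y - 1‖ * ‖x - y‖⁻¹ := by ring
    _ ≤ 2 / ‖x‖ * ‖x - y‖⁻¹ := by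
      gcongr ?_ * _
      rw [div_le_div_iff₀ hden hx_pos]
      nlinarith [norm_nonneg y]

/-- There is a universal constant `C` such that for every `x ∈ B₁(0) ⊆ ℂ`
with `x ≠ 0`, `∫_{B₁(0)} (1 − |y|²) / (|x − y| |x ȳ − 1|) dy ≤ C/|x|`; in particular the
bound `|x ȳ − 1| ≥ |x| (1 − |y|)` holds for all `y ∈ B₁(0)`. -/
theorem stmt_13 :
    ∃ C : ℝ, ∀ x ∈ ball (0 : ℂ) 1, x ≠ 0 →
      (∫ y in ball (0 : ℂ) 1,
          (1 - ‖y‖ ^ 2) /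
            (‖x - y‖ * ‖x * (starRingEnd ℂ) y - 1‖))
        ≤ C / ‖x‖ ∧
      ∀ y ∈ ball (0 : ℂ) 1,
        ‖x‖ * (1 - ‖y‖) ≤ ‖x * (starRingEnd ℂ) y - 1‖ := by
  refine ⟨2 * ∫ z in ball (0 : ℂ) 2, ‖z‖⁻¹, fun x hx hx₀ => ?_⟩
  have hx₁ : ‖x‖ < 1 := mem_ball_zero_iff.1 hx
  have hdim : 1 < Module.finrank ℝ ℂ := by simp
  refine ⟨?_, fun y _ => norm_mul_one_sub_norm_le_norm_mul_conj_sub_one hx₁.le y⟩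
  have hnonneg : ∀ᵐ y ∂volume.restrict (ball (0 : ℂ) 1),
      0 ≤ (1 - ‖y‖ ^ 2) / (‖x - y‖ * ‖x * conj y - 1‖) := by
    filter_upwards [ae_restrict_mem measurableSet_ball] with y hy
    have : ‖y‖ < 1 := mem_ball_zero_iff.1 hy
    exact div_nonneg (by nlinarith [norm_nonneg y]) (by positivity)
  have hle : ∀ᵐ y ∂volume.restrict (ball (0 : ℂ) 1),
      (1 - ‖y‖ ^ 2) / (‖x - y‖ * ‖x * conj y - 1‖) ≤ 2 / ‖x‖ * ‖x - y‖⁻¹ := by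
    filter_upwards [ae_restrict_mem measurableSet_ball] with y hy
    exact one_sub_norm_sq_div_le hx₀ hx₁.le (mem_ball_zero_iff.1 hy)
  calc _ ≤ ∫ y in ball (0 : ℂ) 1, 2 / ‖x‖ * ‖x - y‖⁻¹ :=
        integral_mono_of_nonneg hnonneg ((integrableOn_ball_norm_sub_inv hdim x 1).const_mul _) hle
    _ = 2 / ‖x‖ * ∫ y in ball (0 : ℂ) 1, ‖x - y‖⁻¹ := integral_const_mul _ _
    _ ≤ 2 / ‖x‖ * ∫ z in ball (0 : ℂ) (1 + 1), ‖z‖⁻¹ := by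
        gcongr
        exact setIntegral_ball_norm_sub_inv_le hdim hx₁.le
    _ = _ := by norm_num; ring
end

section
/- Let ε > 0, let x ∈ B_1(0) with δ = d(x, ∂B_1(0)), and let t ∈ B_1(0) ∖ B(x, δε) with d(t, ∂B(x, δε)) ≥ δε. Set δ' = d(t, ∂(B_1(0) ∖ B(x, δε))) = min( d(t, ∂B(x, δε)), d(t, ∂B_1(0)) ). Then δ' ≤ d(t, ∂B_1(0)) ≤ (2 + 1/ε) δ'; that is, δ' is of the order of d(t, ∂B_1(0)). -/
open MeasureTheory Filter Metric Real Topology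

/-- The Euclidean plane. -/
abbrev E2 := EuclideanSpace ℝ (Fin 2)

/-! The distance to `∂B₁(0)` is 1-Lipschitz, so `d(t, ∂B₁(0)) ≤ δ + d(t, x) ≤ δ + δ' + δε`
when `δ' = d(t, ∂B(x, δε))`; the hypothesis `δε ≤ δ'` turns the two `δ`-terms into
`δ'/ε + δ'`. -/

namespace Metric

variable {α : Type*} [PseudoMetricSpace α]

lemma dist_sub_le_infDist_sphere {t c : α} {r : ℝ} (hr : (sphere c r).Nonempty) :
    dist t c - r ≤ infDist t (sphere c r) := by
  refine (le_infDist hr).2 fun y hy => ?_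
  have hyc : dist y c = r := mem_sphere.1 hy
  linarith [dist_triangle t y c]

lemma infDist_le_infDist_add_infDist_sphere (s : Set α) {t x : α} {ρ : ℝ}
    (hρ : (sphere x ρ).Nonempty) :
    infDist t s ≤ infDist x s + infDist t (sphere x ρ) + ρ := by
  linarith [infDist_le_infDist_add_dist (x := t) (y := x) (s := s),
    dist_sub_le_infDist_sphere (t := t) hρ]

end Metric

theorem stmt_14_general (ε : ℝ) (hε : 0 < ε) (x t : E2)
    (δ : ℝ) (hδ : δ = infDist x (sphere (0 : E2) 1))
    (ht2 : δ * ε ≤ infDist t (sphere x (δ * ε)))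
    (δ' : ℝ)
    (hδ' : δ' = min (infDist t (sphere x (δ * ε))) (infDist t (sphere (0 : E2) 1))) :
    δ' ≤ infDist t (sphere (0 : E2) 1) ∧
      infDist t (sphere (0 : E2) 1) ≤ (2 + 1 / ε) * δ' := by
  set D := infDist t (sphere x (δ * ε))
  set D₁ := infDist t (sphere (0 : E2) 1)
  have hδ₀ : 0 ≤ δ := hδ ▸ infDist_nonneg
  have hD₁ : D₁ ≤ δ + D + δ * ε := by
    have := infDist_le_infDist_add_infDist_sphere (sphere (0 : E2) 1) (t := t) (x := x)
      (NormedSpace.sphere_nonempty.2 (by positivity : 0 ≤ δ * ε))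
    rwa [← hδ] at this
  have hδD : δ ≤ D / ε := (le_div_iff₀ hε).2 ht2
  have hcoef : (2 + 1 / ε) * D = D / ε + D + D := by field_simp; ring
  refine ⟨hδ' ▸ min_le_right _ _, ?_⟩
  rcases min_cases D D₁ with ⟨hmin, -⟩ | ⟨hmin, -⟩ <;> rw [hδ', hmin]
  · linarith
  · exact le_mul_of_one_le_left infDist_nonneg (by linarith [one_div_pos.2 hε])

/-- Let `ε > 0`, `x ∈ B₁(0)` with `δ = d(x, ∂B₁(0))`, and let
`t ∈ B₁(0) ∖ B(x, δε)` with `d(t, ∂B(x, δε)) ≥ δε`. Setting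
`δ' = min(d(t, ∂B(x, δε)), d(t, ∂B₁(0)))`, one has
`δ' ≤ d(t, ∂B₁(0)) ≤ (2 + 1/ε) δ'`. -/
theorem stmt_14 (ε : ℝ) (hε : 0 < ε) (x t : E2)
    (hx : x ∈ ball (0 : E2) 1)
    (δ : ℝ) (hδ : δ = infDist x (sphere (0 : E2) 1))
    (ht : t ∈ ball (0 : E2) 1 \ ball x (δ * ε))
    (ht2 : δ * ε ≤ infDist t (sphere x (δ * ε)))
    (δ' : ℝ)
    (hδ' : δ' = min (infDist t (sphere x (δ * ε))) (infDist t (sphere (0 : E2) 1))) :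
    δ' ≤ infDist t (sphere (0 : E2) 1) ∧
      infDist t (sphere (0 : E2) 1) ≤ (2 + 1 / ε) * δ' :=
  stmt_14_general ε hε x t δ hδ ht2 δ' hδ'
end
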